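/- (Nathanson) Let A = {a₀, a₁, …, a_m} be a finite set of integers with a₀ = 0 < a₁ < ⋯ < a_m = a and gcd(a₁, a₂, …, a_m) = 1. Then there exist non-negative integers c and d and sets C ⊆ [0, c−2] and D ⊆ [0, d−2] such that for all integers k ≥ a²m, kA = C ∪ [c, ka − d] ∪ (ka − D). -/

import Mathlib

/-!
Let `a = max A` and `n = a² m`. Bézout's identity for `A`, reduced modulo `a`, writes every residue
class as `∑ cₜ t` over the at most `m` nonzero `t ∈ A` with `0 ≤ cₜ < a`, an element of `s A` with
`s ≤ m (a - 1)`; adding copies of `a` then fills `[n, k a - n] ⊆ k A`. Since `0 ∈ A ⊆ [0, a]`, an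
element of `k A` below `j ≤ k` is a sum with at least `k - j` zero terms, so below `n` all the `k A`
with `k ≥ n` agree with `n A`; the reflection `x ↦ k a - x`, which trades `A` for `a - A`, gives the
same near the top. `C` and `D` are read off from `n A` and `n (a - A)`.
-/

open Pointwise

/-- The `n`-fold iterated sumset: `iterSum 0 A = {0}`, `iterSum (n+1) A = A + iterSum n A`. -/
def iterSum {G : Type*} [AddCommGroup G] [DecidableEq G] : ℕ → Finset G → Finset G
  | 0, _ => {0}
  | n + 1, A => A + iterSum n A

open Finset

theorem iterSum_eq_nsmul {G : Type*} [AddCommGroup G] [DecidableEq G] (A : Finset G) :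
    ∀ n, iterSum n A = n • A
  | 0 => (zero_nsmul A).symm
  | n + 1 => by rw [iterSum, succ_nsmul', iterSum_eq_nsmul A n]

namespace Finset

variable {α : Type*} [DecidableEq α]

theorem sum_nsmul_mem_nsmul [AddCommMonoid α] {ι : Type*} {A : Finset α} {s : Finset ι}
    (c : ι → ℕ) {v : ι → α} (hv : ∀ i ∈ s, v i ∈ A) :
    ∑ i ∈ s, c i • v i ∈ (∑ i ∈ s, c i) • A := by
  classical
  induction s using Finset.induction_on with
  | empty => simp
  | insert i s hi ih =>
    rw [sum_insert hi, sum_insert hi, add_nsmul]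
    exact add_mem_add (nsmul_mem_nsmul (hv i (mem_insert_self i s)))
      (ih fun j hj => hv j (mem_insert_of_mem hj))

theorem nsmul_subset_Icc [AddCommMonoid α] [PartialOrder α] [IsOrderedAddMonoid α]
    [LocallyFiniteOrder α] {A : Finset α} {l u : α} (hA : A ⊆ Icc l u) :
    ∀ n : ℕ, n • A ⊆ Icc (n • l) (n • u)
  | 0 => by simp only [zero_nsmul, Icc_self]; rfl
  | n + 1 => by
    simp only [succ_nsmul]
    exact (add_subset_add (nsmul_subset_Icc hA n) hA).trans (Icc_add_Icc_subset _ _ _ _)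

theorem mem_nsmul_of_le_of_mem_succ_nsmul {A : Finset ℤ} (hA : ∀ t ∈ A, 0 ≤ t) :
    ∀ {k : ℕ} {x : ℤ}, x ∈ (k + 1) • A → x ≤ k → x ∈ k • A
  | 0, x, hx, hxk => by
    rw [zero_add, one_nsmul] at hx
    simp [le_antisymm (by exact_mod_cast hxk) (hA x hx)]
  | k + 1, x, hx, hxk => by
    obtain ⟨b, hb, y, hy, rfl⟩ := mem_add.1 (succ_nsmul' A (k + 1) ▸ hx)
    rcases (hA b hb).eq_or_lt with rfl | hb0
    · rwa [zero_add]
    · rw [succ_nsmul']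
      exact add_mem_add hb (mem_nsmul_of_le_of_mem_succ_nsmul hA hy (by push_cast at hxk; omega))

theorem mem_nsmul_iff_of_lt {A : Finset ℤ} (hA : ∀ t ∈ A, 0 ≤ t) (h0 : 0 ∈ A) {j k : ℕ}
    (hjk : j ≤ k) {x : ℤ} (hxj : x < j) : x ∈ k • A ↔ x ∈ j • A := by
  refine ⟨fun hx => ?_, fun hx => nsmul_subset_nsmul_right h0 hjk hx⟩
  induction k, hjk using Nat.le_induction with
  | base => exact hx
  | succ k hjk ih => exact ih (mem_nsmul_of_le_of_mem_succ_nsmul hA hx (by omega))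

theorem exists_mem_nsmul_modEq {A : Finset ℤ} (hA : A.gcd id = 1) {a : ℤ} (ha : 0 < a) (x : ℤ) :
    ∃ s : ℕ, (s : ℤ) ≤ #(A.erase 0) * (a - 1) ∧ ∃ w ∈ s • A, w ≡ x [ZMOD a] := by
  obtain ⟨g, hg⟩ := A.gcd_eq_sum_mul id
  rw [hA, ← sum_erase A (f := fun t => id t * g t) (a := 0) (by simp)] at hg
  -- reduce the Bézout coefficients of `x = ∑ x g(t) t` modulo `a`
  set c : ℤ → ℕ := fun t => (x * g t % a).toNat
  have hc : ∀ t, (c t : ℤ) = x * g t % a := fun t => Int.toNat_of_nonneg (Int.emod_nonneg _ ha.ne')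
  refine ⟨∑ t ∈ A.erase 0, c t, ?_, ∑ t ∈ A.erase 0, c t • t,
    sum_nsmul_mem_nsmul c fun t ht => mem_of_mem_erase ht, ?_⟩
  · push_cast
    calc ∑ t ∈ A.erase 0, (c t : ℤ) ≤ ∑ t ∈ A.erase 0, (a - 1) :=
          sum_le_sum fun t _ => by rw [hc]; linarith [Int.emod_lt_of_pos (x * g t) ha]
      _ = #(A.erase 0) * (a - 1) := by rw [sum_const, nsmul_eq_mul]
  · calc ∑ t ∈ A.erase 0, c t • t ≡ ∑ t ∈ A.erase 0, x * g t * t [ZMOD a] :=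
          Int.ModEq.sum fun t _ => by
            rw [← natCast_zsmul, smul_eq_mul, hc]; exact (Int.mod_modEq _ _).mul_right t
      _ = x * ∑ t ∈ A.erase 0, id t * g t := by
          rw [mul_sum]; exact sum_congr rfl fun t _ => by simp only [id]; ring
      _ = x := by rw [← hg, mul_one]

theorem pos_of_gcd_eq_one {A : Finset ℤ} {a : ℤ} (hA : A ⊆ Icc 0 a) (hgcd : A.gcd id = 1) :
    0 < a := by
  by_contra! ha
  have : A.gcd id = 0 := gcd_eq_zero_iff.2 fun t ht => by
    have := mem_Icc.1 (hA ht); simp only [id]; omega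
  exact one_ne_zero (hgcd.symm.trans this)

theorem Icc_subset_nsmul {A : Finset ℤ} {a : ℤ} {m : ℕ} (hA : A ⊆ Icc 0 a) (h0 : 0 ∈ A)
    (haA : a ∈ A) (hgcd : A.gcd id = 1) (hcard : #A ≤ m + 1) (k : ℕ) :
    Icc (a ^ 2 * m) (k * a - a ^ 2 * m) ⊆ k • A := by
  intro x hx
  rw [mem_Icc] at hx
  have ha := pos_of_gcd_eq_one hA hgcd
  obtain ⟨s, hsA, w, hw, hwx⟩ := exists_mem_nsmul_modEq hgcd ha x
  have hs : (s : ℤ) ≤ m * (a - 1) := by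
    have : (#(A.erase 0) : ℤ) ≤ m := by rw [card_erase_of_mem h0]; omega
    nlinarith
  have hwb := mem_Icc.1 (nsmul_subset_Icc hA s hw)
  rw [smul_zero, nsmul_eq_mul] at hwb
  obtain ⟨q, hq⟩ := hwx.dvd
  have hq0 : 0 ≤ q := by nlinarith
  have hsq : (s : ℤ) + q ≤ k := le_of_mul_le_mul_left (by nlinarith) ha
  lift q to ℕ using hq0
  have hx : x = w + q • a := by rw [nsmul_eq_mul]; linarith
  rw [hx]
  exact nsmul_subset_nsmul_right h0 (show s + q ≤ k by omega)
    (add_nsmul A s q ▸ add_mem_add hw (nsmul_mem_nsmul haA))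

theorem exists_final_interval (T : Finset ℤ) (n : ℕ) :
    ∃ c ≤ n, ∃ C ⊆ Icc 0 ((c : ℤ) - 2),
      ∀ x : ℤ, 0 ≤ x → x < n → (x ∈ T ↔ x ∈ C ∨ (c : ℤ) ≤ x) := by
  classical
  let P : ℕ → Prop := fun c => ∀ x : ℤ, c ≤ x → x < n → x ∈ T
  have hP : ∃ c, P c := ⟨n, fun x h1 h2 => by omega⟩
  have hc := Nat.find_spec hP
  refine ⟨Nat.find hP, Nat.find_le fun x h1 h2 => by omega, T ∩ Icc 0 ((Nat.find hP : ℤ) - 2),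
    inter_subset_right, fun x hx0 hxn => ?_⟩
  simp only [mem_inter, mem_Icc]
  refine ⟨fun hxT => ?_, by rintro (⟨hxT, -⟩ | hcx); exacts [hxT, hc x hcx hxn]⟩
  by_contra! h
  have hx : x = Nat.find hP - 1 := by have := h.1 hxT hx0; omega
  -- `Nat.find hP - 1 ∈ T`, so the interval could start one step earlier
  refine Nat.find_min hP (m := Nat.find hP - 1) (by omega) fun y hy hyn => ?_
  rcases (show y = x ∨ (Nat.find hP : ℤ) ≤ y by omega) with rfl | hy
  exacts [hxT, hc y hy hyn]

theorem eq_union_Icc_union_image {S C D : Finset ℤ} {n c d : ℕ} {N : ℤ} (hc : c ≤ n) (hd : d ≤ n)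
    (hC : C ⊆ Icc 0 ((c : ℤ) - 2)) (hD : D ⊆ Icc 0 ((d : ℤ) - 2)) (hS : S ⊆ Icc 0 N)
    (hlow : ∀ x : ℤ, 0 ≤ x → x < n → (x ∈ S ↔ x ∈ C ∨ (c : ℤ) ≤ x))
    (hhigh : ∀ y : ℤ, 0 ≤ y → y < n → (N - y ∈ S ↔ y ∈ D ∨ (d : ℤ) ≤ y))
    (hmid : Icc (n : ℤ) (N - n) ⊆ S) :
    S = C ∪ Icc (c : ℤ) (N - d) ∪ D.image (fun y => N - y) := by
  ext x
  simp only [mem_union, mem_Icc, mem_image]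
  constructor
  · intro hx
    obtain ⟨hx0, hxN⟩ := mem_Icc.1 (hS hx)
    by_cases hxD : ∃ y ∈ D, N - y = x
    · exact Or.inr hxD
    by_cases hxC : x ∈ C
    · exact Or.inl (Or.inl hxC)
    refine Or.inl (Or.inr ⟨?_, ?_⟩)
    · by_contra! h
      exact hxC (((hlow x hx0 (by omega)).1 hx).resolve_right (by omega))
    · by_contra! h
      have hNx := (hhigh (N - x) (by omega) (by omega)).1 (by rwa [sub_sub_cancel])
      exact hxD ⟨N - x, hNx.resolve_right (by omega), sub_sub_cancel N x⟩
  · rintro ((hx | hx) | ⟨y, hy, rfl⟩)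
    · have hxc := mem_Icc.1 (hC hx)
      exact (hlow x hxc.1 (by omega)).2 (Or.inl hx)
    · by_cases hxn : x < n
      · exact (hlow x (by omega) hxn).2 (Or.inr hx.1)
      by_cases hNx : N - x < n
      · rw [← sub_sub_cancel N x]
        exact (hhigh (N - x) (by omega) hNx).2 (Or.inr (by omega))
      exact hmid (mem_Icc.2 ⟨by omega, by omega⟩)
    · have hyd := mem_Icc.1 (hD hy)
      exact (hhigh y hyd.1 (by omega)).2 (Or.inl hy)

theorem mem_nsmul_singleton_sub_iff {A : Finset ℤ} {a y : ℤ} (k : ℕ) :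
    y ∈ k • ({a} - A) ↔ k * a - y ∈ k • A := by
  rw [nsmul_sub, nsmul_singleton, singleton_sub, mem_image, nsmul_eq_mul]
  exact ⟨by rintro ⟨z, hz, rfl⟩; rwa [sub_sub_cancel], fun h => ⟨_, h, sub_sub_cancel _ _⟩⟩

theorem exists_nsmul_eq_union_Icc_union_image {A : Finset ℤ} {a : ℤ} (hA : A ⊆ Icc 0 a)
    (h0 : 0 ∈ A) (haA : a ∈ A) (n : ℕ)
    (hmid : ∀ k : ℕ, n ≤ k → Icc (n : ℤ) (k * a - n) ⊆ k • A) :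
    ∃ (c d : ℕ) (C D : Finset ℤ), C ⊆ Icc 0 ((c : ℤ) - 2) ∧ D ⊆ Icc 0 ((d : ℤ) - 2) ∧
      ∀ k : ℕ, n ≤ k →
        k • A = C ∪ Icc (c : ℤ) (k * a - d) ∪ D.image (fun y => k * a - y) := by
  have hpos : ∀ t ∈ A, 0 ≤ t := fun t ht => (mem_Icc.1 (hA ht)).1
  have hpos' : ∀ t ∈ {a} - A, 0 ≤ t := by
    simp only [singleton_sub, mem_image]
    rintro _ ⟨t, ht, rfl⟩
    linarith [(mem_Icc.1 (hA ht)).2]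
  have h0' : 0 ∈ ({a} - A) := by rw [singleton_sub]; exact mem_image.2 ⟨a, haA, sub_self a⟩
  obtain ⟨c, hcn, C, hC, hlow⟩ := exists_final_interval (n • A) n
  obtain ⟨d, hdn, D, hD, hhigh⟩ := exists_final_interval (n • ({a} - A)) n
  refine ⟨c, d, C, D, hC, hD, fun k hk => eq_union_Icc_union_image hcn hdn hC hD ?_
    (fun x hx0 hxn => ?_) (fun y hy0 hyn => ?_) (hmid k hk)⟩
  · simpa [nsmul_eq_mul] using nsmul_subset_Icc hA k
  · rw [mem_nsmul_iff_of_lt hpos h0 hk hxn]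
    exact hlow x hx0 hxn
  · rw [← mem_nsmul_singleton_sub_iff, mem_nsmul_iff_of_lt hpos' h0' hk hyn]
    exact hhigh y hy0 hyn

end Finset

theorem stmt9_general (m : ℕ) (f : ℕ → ℤ) (hf0 : f 0 = 0)
    (hmono : ∀ i, i < m → f i < f (i + 1))
    (A : Finset ℤ) (hA : A = (Finset.range (m + 1)).image f)
    (hgcd : A.gcd id = 1) :
    ∃ (c d : ℕ) (C D : Finset ℤ),
      C ⊆ Finset.Icc 0 ((c : ℤ) - 2) ∧ D ⊆ Finset.Icc 0 ((d : ℤ) - 2) ∧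
      ∀ k : ℕ, (f m) ^ 2 * m ≤ (k : ℤ) →
        iterSum k A = C ∪ Finset.Icc (c : ℤ) ((k : ℤ) * f m - d) ∪
          D.image (fun x => (k : ℤ) * f m - x) := by
  have hf : MonotoneOn f (Set.Iic m) := (strictMonoOn_Iic_of_lt_succ hmono).monotoneOn
  have hAa : A ⊆ Icc 0 (f m) := by
    rw [hA, ← hf0]
    rintro _ hx
    obtain ⟨i, hi, rfl⟩ := mem_image.1 hx
    have hi : i ≤ m := Nat.lt_succ_iff.1 (mem_range.1 hi)
    exact mem_Icc.2 ⟨hf (Set.mem_Iic.2 m.zero_le) hi i.zero_le, hf hi Set.self_mem_Iic hi⟩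
  have h0 : 0 ∈ A := hA ▸ mem_image.2 ⟨0, by simp, hf0⟩
  have haA : f m ∈ A := hA ▸ mem_image.2 ⟨m, by simp, rfl⟩
  have hcard : #A ≤ m + 1 := hA ▸ card_image_le.trans (card_range _).le
  obtain ⟨n, hn⟩ : ∃ n : ℕ, (n : ℤ) = f m ^ 2 * m := ⟨_, Int.toNat_of_nonneg (by positivity)⟩
  obtain ⟨c, d, C, D, hC, hD, h⟩ := exists_nsmul_eq_union_Icc_union_image hAa h0 haA n
    fun k _ => hn ▸ Icc_subset_nsmul hAa h0 haA hgcd hcard k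
  exact ⟨c, d, C, D, hC, hD, fun k hk => iterSum_eq_nsmul A k ▸ h k (by omega)⟩

theorem stmt9 (m : ℕ) (hm : 1 ≤ m) (f : ℕ → ℤ) (hf0 : f 0 = 0)
    (hmono : ∀ i, i < m → f i < f (i + 1))
    (A : Finset ℤ) (hA : A = (Finset.range (m + 1)).image f)
    (hgcd : A.gcd id = 1) :
    ∃ (c d : ℕ) (C D : Finset ℤ),
      C ⊆ Finset.Icc 0 ((c : ℤ) - 2) ∧ D ⊆ Finset.Icc 0 ((d : ℤ) - 2) ∧
      ∀ k : ℕ, (f m) ^ 2 * m ≤ (k : ℤ) →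
        iterSum k A = C ∪ Finset.Icc (c : ℤ) ((k : ℤ) * f m - d) ∪
          D.image (fun x => (k : ℤ) * f m - x) :=
  stmt9_general m f hf0 hmono A hA hgcd
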